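/- arXiv:1801.02523 — 6 statements merged into one kernel-verified Lean document; each statement's English description precedes it below -/
import Mathlib

section
/- If I is an ideal on ℕ containing all finite sets that has no ⊆*-maximal element, then the ideal generated by I ∪ I^⊥ is a proper ideal on ℕ. -/
open Set Filter Cardinal

/-- `a ⊆* b` : `a` is almost contained in `b` (mod finite). -/
def almostLE (a b : Set ℕ) : Prop := (a \ b).Finite

/-- `f <* g` : eventual domination mod finite. -/
def domLT (f g : ℕ → ℕ) : Prop := {k | g k ≤ f k}.Finite

/-- The bounding number 𝔟. -/
noncomputable def bNum : Cardinal :=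
  sInf { c | ∃ F : Set (ℕ → ℕ), Cardinal.mk F = c ∧ ∀ g : ℕ → ℕ, ∃ f ∈ F, ¬ domLT f g }

/-- The dominating number 𝔡. -/
noncomputable def dNum : Cardinal :=
  sInf { c | ∃ F : Set (ℕ → ℕ), Cardinal.mk F = c ∧ ∀ g : ℕ → ℕ, ∃ f ∈ F, domLT g f }

/-- `c` reaps the family `A`. -/
def Reaps (c : Set ℕ) (A : Set (Set ℕ)) : Prop :=
  ∀ a ∈ A, (a ∩ c).Infinite ∧ (a \ c).Infinite

/-- The reaping number 𝔯. -/
noncomputable def rNum : Cardinal :=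
  sInf { c | ∃ A : Set (Set ℕ), Cardinal.mk A = c ∧ (∀ a ∈ A, a.Infinite) ∧
    ∀ d : Set ℕ, ¬ Reaps d A }

/-- The splitting number 𝔰. -/
noncomputable def sNum : Cardinal :=
  sInf { c | ∃ A : Set (Set ℕ), Cardinal.mk A = c ∧ ∀ b : Set ℕ, b.Infinite →
    ∃ a ∈ A, (b ∩ a).Infinite ∧ (b \ a).Infinite }

/-- `next(a,k)`, the least element of `a` above `k`. -/
noncomputable def nxt (a : Set ℕ) (k : ℕ) : ℕ := sInf {n | n ∈ a ∧ k < n}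

/-- ℕ*, the Stone–Čech remainder, realized as the space of free ultrafilters on ℕ. -/
abbrev NStar : Type := {x : Ultrafilter ℕ // (Filter.cofinite : Filter ℕ) ≤ ↑x}

/-- For `a ⊆ ℕ`, the basic clopen set `a*` of free ultrafilters containing `a`. -/
def setStar (a : Set ℕ) : Set NStar := {x | a ∈ x.1}

/-- The ideal `I_A = { a ⊆ ℕ : a* ⊆ A }`. -/
def idealOf (A : Set NStar) : Set (Set ℕ) := {a | setStar a ⊆ A}

/-- `A` is almost clopen: the closure of an open set with a unique boundary point. -/
def AlmostClopen (A : Set NStar) : Prop :=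
  (∃ U : Set NStar, IsOpen U ∧ A = closure U) ∧ ∃! x : NStar, x ∈ frontier A

/-- `x` is a tie-point as witnessed by the closed sets `A`, `B`. -/
def TiePoint {X : Type*} [TopologicalSpace X] (x : X) (A B : Set X) : Prop :=
  IsClosed A ∧ IsClosed B ∧ A ∪ B = Set.univ ∧ A ∩ B = {x} ∧
    x ∈ closure (A \ {x}) ∧ x ∈ closure (B \ {x})

/-- An almost clopen set `A` is simple of type `κ`: `I_A` has a strictly ⊆*-increasing,
⊆*-cofinal chain of order type `κ`. -/
def SimpleType (A : Set NStar) (κ : Cardinal) : Prop :=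
  ∃ a : Ordinal → Set ℕ,
    (∀ α, α < κ.ord → a α ∈ idealOf A) ∧
    (∀ α β, α < β → β < κ.ord → almostLE (a α) (a β) ∧ (a β \ a α).Infinite) ∧
    (∀ c ∈ idealOf A, ∃ α, α < κ.ord ∧ almostLE c (a α))

/-- The family `A` converges to the ultrafilter `x`. -/
def Converges (A : Set (Set ℕ)) (x : Ultrafilter ℕ) : Prop :=
  ∀ U ∈ x, Cardinal.mk {a : Set ℕ // a ∈ A ∧ (a \ U).Infinite} < Cardinal.mk A

/-- `A` is hereditarily unreapable. -/
def HeredUnreapable (A : Set (Set ℕ)) : Prop :=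
  ∀ B ⊆ A, (∃ c : Set ℕ, Reaps c B) → Cardinal.mk B < Cardinal.mk A

/-- `f <_x g` for an ultrafilter `x`. -/
def ultLT (x : Ultrafilter ℕ) (f g : ℕ → ℕ) : Prop := {n | f n < g n} ∈ x

/-- A fixed `<*`-increasing `<*`-unbounded family `{f_ξ : ξ < 𝔟}` of strictly increasing
functions. -/
def UnbddChain (f : Ordinal → ℕ → ℕ) : Prop :=
  (∀ ξ, ξ < bNum.ord → StrictMono (f ξ)) ∧
  (∀ η ξ, η < ξ → ξ < bNum.ord → domLT (f η) (f ξ)) ∧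
  (∀ g : ℕ → ℕ, ∃ ξ, ξ < bNum.ord ∧ ¬ domLT (f ξ) g)

/-- `x` is an almost `P_λ`-point. -/
def AlmostPPoint (x : Ultrafilter ℕ) (lam : Cardinal) : Prop :=
  ∀ F : Set (Set ℕ), (∀ U ∈ F, U ∈ x) → Cardinal.mk F < lam →
    ∃ p : Set ℕ, p.Infinite ∧ ∀ U ∈ F, almostLE p U

/-- The orthogonal ideal `A^⊥`. -/
def perp (A : Set (Set ℕ)) : Set (Set ℕ) := {b | ∀ a ∈ A, (b ∩ a).Finite}

theorem stmt1_general (I : Set (Set ℕ))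
    (hnomax : ∀ s ∈ I, ∃ t ∈ I, almostLE s t ∧ (t \ s).Infinite) :
    (Set.univ : Set ℕ) ∉ {c : Set ℕ | ∃ s ∈ I, ∃ t ∈ perp I, c ⊆ s ∪ t} := by
  rintro ⟨s, hs, t, ht, hcover⟩
  obtain ⟨t', ht', -, hinf⟩ := hnomax s hs
  have hdiff_sub : t' \ s ⊆ t ∩ t' := fun x hx =>
    ⟨(hcover (mem_univ x)).resolve_left hx.2, hx.1⟩
  exact hinf ((ht t' ht').subset hdiff_sub)

theorem stmt1 (I : Set (Set ℕ))
    (hdown : ∀ s ∈ I, ∀ t ⊆ s, t ∈ I)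
    (hunion : ∀ s ∈ I, ∀ t ∈ I, s ∪ t ∈ I)
    (hfin : ∀ s : Set ℕ, s.Finite → s ∈ I)
    (hnomax : ∀ s ∈ I, ∃ t ∈ I, almostLE s t ∧ (t \ s).Infinite) :
    (Set.univ : Set ℕ) ∉ {c : Set ℕ | ∃ s ∈ I, ∃ t ∈ perp I, c ⊆ s ∪ t} :=
  stmt1_general I hnomax
end

section
/- If A is a family of infinite subsets of ℕ and there exists g : ℕ → ℕ such that next(a,·) <* g for every a ∈ A, then A can be reaped, i.e., there is c ⊆ ℕ such that both a ∩ c and a \ c are infinite for every a ∈ A. -/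
open Set Filter Cardinal

/-!
Choose `N` strictly increasing with `g (N i) < N (i + 1)`. For each `a ∈ A`, eventually
`nxt a < g`, so for all large `i` the element `nxt a (N i)` of `a` lies in the block
`[N i, N (i + 1))`. Hence `a` meets all but finitely many blocks, and the union of the
even-indexed blocks reaps `A`.
-/

def blockUnion (N : ℕ → ℕ) (P : ℕ → Prop) : Set ℕ :=
  {m | ∃ i, P i ∧ m ∈ Ico (N i) (N (i + 1))}

section Blocks

variable {N : ℕ → ℕ}

theorem StrictMono.eq_of_mem_Ico_succ (hN : StrictMono N) {m i j : ℕ}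
    (hi : m ∈ Ico (N i) (N (i + 1))) (hj : m ∈ Ico (N j) (N (j + 1))) : i = j :=
  le_antisymm (Nat.lt_succ_iff.1 (hN.lt_iff_lt.1 (hi.1.trans_lt hj.2)))
    (Nat.lt_succ_iff.1 (hN.lt_iff_lt.1 (hj.1.trans_lt hi.2)))

theorem blockUnion_odd_subset_compl_even (hN : StrictMono N) :
    blockUnion N Odd ⊆ (blockUnion N Even)ᶜ := by
  rintro m ⟨i, hi, hmi⟩ ⟨j, hj, hmj⟩
  rw [hN.eq_of_mem_Ico_succ hmi hmj, ← Nat.not_even_iff_odd] at hi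
  exact hi hj

theorem infinite_inter_blockUnion (hN : StrictMono N) {a : Set ℕ} {P : ℕ → Prop}
    (ha : ∀ᶠ i in atTop, (a ∩ Ico (N i) (N (i + 1))).Nonempty) (hP : ∃ᶠ i in atTop, P i) :
    (a ∩ blockUnion N P).Infinite := by
  refine Set.infinite_of_forall_exists_gt fun b => ?_
  obtain ⟨i, ⟨hPi, m, hma, hmi⟩, hbi⟩ := ((hP.and_eventually ha).and_eventually
    (eventually_gt_atTop b)).exists
  exact ⟨m, ⟨hma, i, hPi, hmi⟩, hbi.trans_le (hN.le_apply.trans hmi.1)⟩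

theorem reaps_blockUnion_even (hN : StrictMono N) {A : Set (Set ℕ)}
    (hA : ∀ a ∈ A, ∀ᶠ i in atTop, (a ∩ Ico (N i) (N (i + 1))).Nonempty) :
    Reaps (blockUnion N Even) A := fun a ha =>
  ⟨infinite_inter_blockUnion hN (hA a ha) Nat.frequently_even,
    (infinite_inter_blockUnion hN (hA a ha) Nat.frequently_odd).mono
      (inter_subset_inter_right a (blockUnion_odd_subset_compl_even hN))⟩

end Blocks

theorem nxt_mem_and_lt {a : Set ℕ} (ha : a.Infinite) (k : ℕ) : nxt a k ∈ a ∧ k < nxt a k :=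
  Nat.sInf_mem (ha.exists_gt k)

theorem domLT.eventually_lt {f g : ℕ → ℕ} (h : domLT f g) : ∀ᶠ k in atTop, f k < g k := by
  rw [← Nat.cofinite_eq_atTop]
  filter_upwards [h.eventually_cofinite_notMem] with k hk
  simpa using hk

theorem exists_strictMono_lt_apply_succ (g : ℕ → ℕ) :
    ∃ N : ℕ → ℕ, StrictMono N ∧ ∀ i, g (N i) < N (i + 1) := by
  let N : ℕ → ℕ := fun i => Nat.rec 0 (fun _ p => max p (g p) + 1) i
  have hN : ∀ i, N (i + 1) = max (N i) (g (N i)) + 1 := fun _ => rfl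
  refine ⟨N, strictMono_nat_of_lt_succ fun i => ?_, fun i => ?_⟩ <;> rw [hN] <;> omega

theorem stmt3 (A : Set (Set ℕ)) (hA : ∀ a ∈ A, a.Infinite) (g : ℕ → ℕ)
    (hg : ∀ a ∈ A, domLT (nxt a) g) :
    ∃ c : Set ℕ, Reaps c A := by
  obtain ⟨N, hN, hgN⟩ := exists_strictMono_lt_apply_succ g
  refine ⟨blockUnion N Even, reaps_blockUnion_even hN fun a ha => ?_⟩
  filter_upwards [hN.tendsto_atTop.eventually (hg a ha).eventually_lt] with i hi
  obtain ⟨hmem, hlt⟩ := nxt_mem_and_lt (hA a ha) (N i)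
  exact ⟨nxt a (N i), hmem, hlt.le, hi.trans (hgN i)⟩
end

section
/- Let {f_ξ : ξ < 𝔟} be a <*-increasing, <*-unbounded family of strictly increasing functions ℕ → ℕ. Then for every infinite b ⊆ ℕ and every unbounded Γ ⊆ 𝔟, the family of restrictions { f_ξ ↾ b : ξ ∈ Γ } is <*-unbounded in ℕ^b (the functions from b to ℕ with the mod-finite domination order). -/
/-!
Given `g`, apply unboundedness of the chain to `n ↦ g (next(b, n))`: some `f_ξ₀` satisfies
`g (next(b, n)) ≤ f_ξ₀ n ≤ f_ξ₀ (next(b, n))` for infinitely many `n`, so `g k ≤ f_ξ₀ k` for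
infinitely many `k ∈ b`. Any `ξ ∈ Γ` above `ξ₀` then works, because `f_ξ₀ <* f_ξ`.
-/

open Set Filter Cardinal

lemma nxt_mem_and_lt_s5 {b : Set ℕ} (hb : b.Infinite) (k : ℕ) : nxt b k ∈ b ∧ k < nxt b k :=
  Nat.sInf_mem (hb.exists_gt k)

lemma infinite_setOf_mem_le_of_comp_nxt {b : Set ℕ} (hb : b.Infinite) {g h : ℕ → ℕ}
    (hh : Monotone h) (hgh : {n | g (nxt b n) ≤ h n}.Infinite) :
    {k | k ∈ b ∧ g k ≤ h k}.Infinite := by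
  refine infinite_of_forall_exists_gt fun m => ?_
  obtain ⟨n, hn, hmn⟩ := hgh.exists_gt m
  obtain ⟨hnxt_mem, hlt_nxt⟩ := nxt_mem_and_lt_s5 hb n
  exact ⟨nxt b n, ⟨hnxt_mem, hn.trans (hh hlt_nxt.le)⟩, hmn.trans hlt_nxt⟩

lemma infinite_setOf_mem_le_of_domLT {b : Set ℕ} {g h h' : ℕ → ℕ} (hdom : domLT h h')
    (hgh : {k | k ∈ b ∧ g k ≤ h k}.Infinite) : {k | k ∈ b ∧ g k ≤ h' k}.Infinite := by
  refine (hgh.sdiff hdom).mono ?_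
  rintro k ⟨⟨hkb, hgk⟩, hhk⟩
  exact ⟨hkb, hgk.trans (not_le.mp hhk).le⟩

lemma UnbddChain.infinite_setOf_mem_le_mono {f : Ordinal → ℕ → ℕ} (hf : UnbddChain f)
    {η ξ : Ordinal} (hηξ : η ≤ ξ) (hξ : ξ < bNum.ord) {b : Set ℕ} {g : ℕ → ℕ}
    (hη : {k | k ∈ b ∧ g k ≤ f η k}.Infinite) : {k | k ∈ b ∧ g k ≤ f ξ k}.Infinite := by
  rcases hηξ.eq_or_lt with rfl | hlt
  · exact hη
  · exact infinite_setOf_mem_le_of_domLT (hf.2.1 η ξ hlt hξ) hη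

theorem stmt5 (f : Ordinal → ℕ → ℕ) (hf : UnbddChain f)
    (b : Set ℕ) (hb : b.Infinite) (Γ : Set Ordinal)
    (hΓsub : ∀ ξ ∈ Γ, ξ < bNum.ord)
    (hΓunb : ∀ η, η < bNum.ord → ∃ ξ ∈ Γ, η ≤ ξ) :
    ∀ g : ℕ → ℕ, ∃ ξ ∈ Γ, {k | k ∈ b ∧ g k ≤ f ξ k}.Infinite := by
  intro g
  obtain ⟨ξ₀, hξ₀, hnot_dom⟩ := hf.2.2 (fun n => g (nxt b n))
  have hξ₀_le : {k | k ∈ b ∧ g k ≤ f ξ₀ k}.Infinite :=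
    infinite_setOf_mem_le_of_comp_nxt hb (hf.1 ξ₀ hξ₀).monotone hnot_dom
  obtain ⟨ξ, hξΓ, hξ₀ξ⟩ := hΓunb ξ₀ hξ₀
  exact ⟨ξ, hξΓ, hf.infinite_setOf_mem_le_mono hξ₀ξ (hΓsub ξ hξΓ) hξ₀_le⟩
end

section
/- There is no almost P_{𝔰⁺}-point in ℕ*: for every free ultrafilter x on ℕ there is a family of at most 𝔰 members of x with no infinite pseudointersection. -/
open Set Filter Cardinal

/-!
Take a splitting family of size `𝔰` and replace each member by whichever of it and its complement
lies in `x`. An infinite pseudointersection `p` of the resulting family is split by some member `a`,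
so `p` is almost contained neither in `a` nor in `aᶜ`.
-/

theorem Set.Infinite.exists_split {α : Type*} {s : Set α} (hs : s.Infinite) :
    ∃ t : Set α, (s ∩ t).Infinite ∧ (s \ t).Infinite := by
  set f := hs.natEmbedding
  have hf : Function.Injective (fun k => (f k : α)) :=
    Subtype.val_injective.comp f.injective
  refine ⟨range fun k => (f (2 * k) : α), ?_, ?_⟩
  · refine (infinite_range_of_injective (hf.comp (f := fun k => 2 * k) fun i j h => by
      simp only at h; omega)).mono ?_
    rintro _ ⟨k, rfl⟩
    exact ⟨(f _).2, k, rfl⟩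
  · refine (infinite_range_of_injective (hf.comp (f := fun k => 2 * k + 1) fun i j h => by
      simp only at h; omega)).mono ?_
    rintro _ ⟨k, rfl⟩
    refine ⟨(f _).2, fun ⟨j, hj⟩ => ?_⟩
    have : 2 * j = 2 * k + 1 := hf hj
    omega

def IsSplittingFamily (A : Set (Set ℕ)) : Prop :=
  ∀ b : Set ℕ, b.Infinite → ∃ a ∈ A, (b ∩ a).Infinite ∧ (b \ a).Infinite

theorem isSplittingFamily_univ : IsSplittingFamily univ := fun _ hb =>
  let ⟨a, hsplit⟩ := hb.exists_split
  ⟨a, trivial, hsplit⟩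

theorem exists_isSplittingFamily_mk_eq_sNum : ∃ A : Set (Set ℕ), #A = sNum ∧ IsSplittingFamily A :=
  csInf_mem (s := {c | ∃ A : Set (Set ℕ), #A = c ∧ IsSplittingFamily A})
    ⟨_, univ, rfl, isSplittingFamily_univ⟩

section UltrafilterSide

variable {α : Type*} (x : Ultrafilter α) (a : Set α)

open Classical in
noncomputable def ultrafilterSide : Set α := if a ∈ x then a else aᶜ

theorem ultrafilterSide_mem : ultrafilterSide x a ∈ x := by
  unfold ultrafilterSide
  split_ifs with ha
  · exact ha
  · exact Ultrafilter.compl_mem_iff_notMem.mpr ha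

end UltrafilterSide

theorem not_almostLE_ultrafilterSide (x : Ultrafilter ℕ) {p a : Set ℕ}
    (hin : (p ∩ a).Infinite) (hout : (p \ a).Infinite) : ¬ almostLE p (ultrafilterSide x a) := by
  unfold ultrafilterSide almostLE
  split_ifs
  · exact hout
  · rwa [sdiff_compl]

theorem IsSplittingFamily.not_exists_pseudointersection {A : Set (Set ℕ)}
    (hA : IsSplittingFamily A) (x : Ultrafilter ℕ) :
    ¬ ∃ p : Set ℕ, p.Infinite ∧ ∀ U ∈ ultrafilterSide x '' A, almostLE p U := by
  rintro ⟨p, hp, hpseudo⟩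
  obtain ⟨a, ha, hin, hout⟩ := hA p hp
  exact not_almostLE_ultrafilterSide x hin hout (hpseudo _ (mem_image_of_mem _ ha))

theorem stmt11_general (x : Ultrafilter ℕ) :
    ∃ F : Set (Set ℕ), (∀ U ∈ F, U ∈ x) ∧ Cardinal.mk F ≤ sNum ∧
      ¬ ∃ p : Set ℕ, p.Infinite ∧ ∀ U ∈ F, almostLE p U := by
  obtain ⟨A, hA, hsplit⟩ := exists_isSplittingFamily_mk_eq_sNum
  refine ⟨ultrafilterSide x '' A, ?_, hA ▸ mk_image_le, hsplit.not_exists_pseudointersection x⟩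
  rintro _ ⟨a, -, rfl⟩
  exact ultrafilterSide_mem x a

theorem stmt11 (x : Ultrafilter ℕ) (hx : (Filter.cofinite : Filter ℕ) ≤ ↑x) :
    ∃ F : Set (Set ℕ), (∀ U ∈ F, U ∈ x) ∧ Cardinal.mk F ≤ sNum ∧
      ¬ ∃ p : Set ℕ, p.Infinite ∧ ∀ U ∈ F, almostLE p U :=
  stmt11_general x
end

section
/- In the forcing poset Q(A; I), where A = {a_β : β < α} is a ⊆*-increasing chain of subsets of ω and I ⊆ A^⊥ is an ideal, any two conditions p, q with F_p = F_q, b_p = b_q, and σ_p ∪ σ_q a function are compatible; consequently Q(A; [ω]^{<ω}) satisfies the countable chain condition. -/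
open Set Filter Cardinal

/-- Conditions of the poset `Q(A; I)` from Definition 3.7 of the paper. -/
structure QCond (alpha : Ordinal) (a : Ordinal → Set ℕ) (I : Set (Set ℕ)) where
  F : Set ℕ
  Ffin : F.Finite
  sigma : Ordinal → Option ℕ
  Hfin : {beta | sigma beta ≠ none}.Finite
  Hlt : ∀ beta, sigma beta ≠ none → beta < alpha
  b : Set ℕ
  bI : b ∈ I
  bF : Disjoint F b
  compat : ∀ beta n, sigma beta = some n → Disjoint {k | k ∈ a beta ∧ n ≤ k} b

/-- The extension order on `Q(A; I)` : `r ≤ q`. -/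
def QLe {alpha : Ordinal} {a : Ordinal → Set ℕ} {I : Set (Set ℕ)}
    (r q : QCond alpha a I) : Prop :=
  q.F ⊆ r.F ∧ (∀ beta n, q.sigma beta = some n → r.sigma beta = some n) ∧ q.b ⊆ r.b

lemma qext {alpha : Ordinal} {a : Ordinal → Set ℕ} {I : Set (Set ℕ)}
    {p q : QCond alpha a I} (h1 : p.F = q.F) (h2 : p.sigma = q.sigma) (h3 : p.b = q.b) :
    p = q := by
  cases p; cases q; simp_all

/-- Two conditions with the same `F`, same `b` and compatible `sigma`s are compatible. -/
lemma qcompat {alpha : Ordinal} {a : Ordinal → Set ℕ} {I : Set (Set ℕ)}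
    (p q : QCond alpha a I) (hF : p.F = q.F) (hb : p.b = q.b)
    (hσ : ∀ beta m n, p.sigma beta = some m → q.sigma beta = some n → m = n) :
    ∃ r : QCond alpha a I, QLe r p ∧ QLe r q := by
  classical
  refine ⟨⟨p.F, p.Ffin, fun β => if p.sigma β = none then q.sigma β else p.sigma β,
      ?_, ?_, p.b, p.bI, p.bF, ?_⟩, ?_, ?_⟩
  · refine (p.Hfin.union q.Hfin).subset ?_
    intro β hβ
    simp only [Set.mem_setOf_eq] at hβ ⊢
    rcases h : p.sigma β with _ | n
    · right; simpa [h] using hβ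
    · left; simp [h]
  · intro β hβ
    rcases h : p.sigma β with _ | n
    · exact q.Hlt β (by simpa [h] using hβ)
    · exact p.Hlt β (by simp [h])
  · intro β n hn
    rcases h : p.sigma β with _ | m
    · simp only [h, if_pos rfl] at hn
      exact hb ▸ q.compat β n hn
    · have hn' : (if p.sigma β = none then q.sigma β else p.sigma β) = some n := hn
      rw [if_neg (by simp [h]), h] at hn'
      injection hn' with hmn
      rw [← hmn]
      exact p.compat β m h
  · refine ⟨le_refl _, ?_, le_refl _⟩
    intro β n hn
    simp [hn]
  · refine ⟨hF.symm.subset, ?_, hb.symm.subset⟩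
    intro β n hn
    rcases h : p.sigma β with _ | m
    · simp [h, hn]
    · simp [h, hσ β m n h hn]

/-- A family of finite partial functions (with domains of size `≤ n`) which pairwise
conflict is countable. -/
lemma conflict_countable (n : ℕ) (W : Set (Ordinal → Option ℕ))
    (hfin : ∀ σ ∈ W, {β | σ β ≠ none}.Finite)
    (hcard : ∀ σ ∈ W, {β | σ β ≠ none}.ncard ≤ n)
    (hconf : ∀ σ ∈ W, ∀ τ ∈ W, σ ≠ τ →
      ∃ β m k, σ β = some m ∧ τ β = some k ∧ m ≠ k) :
    W.Countable := by
  classical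
  induction n generalizing W with
  | zero =>
    refine Set.Subsingleton.countable ?_
    intro σ hσ τ hτ
    by_contra hne
    obtain ⟨β, m, k, hm, hk, hmk⟩ := hconf σ hσ τ hτ hne
    have : β ∈ {β | σ β ≠ none} := by simp [hm]
    have he : {β | σ β ≠ none} = ∅ :=
      (Set.ncard_eq_zero (hfin σ hσ)).mp (Nat.le_zero.mp (hcard σ hσ))
    simp [he] at this
  | succ n ih =>
    by_contra hW
    by_cases hA : ∀ β, {σ ∈ W | σ β ≠ none}.Countable
    · -- every coordinate appears in countably many members
      rcases Set.eq_empty_or_nonempty W with rfl | ⟨σ₀, hσ₀⟩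
      · exact hW Set.countable_empty
      have hsub : W ⊆ {σ₀} ∪ ⋃ β ∈ {β | σ₀ β ≠ none}, {σ ∈ W | σ β ≠ none} := by
        intro σ hσ
        by_cases he : σ = σ₀
        · exact Or.inl (by simp [he])
        · obtain ⟨β, m, k, hm, hk, hmk⟩ := hconf σ hσ σ₀ hσ₀ he
          refine Or.inr (Set.mem_iUnion₂.mpr ⟨β, ?_, ?_⟩)
          · simp [hk]
          · exact ⟨hσ, by simp [hm]⟩
      exact hW (((Set.countable_singleton σ₀).union
        (Set.Countable.biUnion (hfin σ₀ hσ₀).countable fun β _ => hA β)).mono hsub)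
    · push_neg at hA
      obtain ⟨β, hβ⟩ := hA
      have hsplit : {σ ∈ W | σ β ≠ none} ⊆ ⋃ m : ℕ, {σ ∈ W | σ β = some m} := by
        intro σ ⟨hσ, hne⟩
        rcases h : σ β with _ | m
        · exact absurd h hne
        · exact Set.mem_iUnion.mpr ⟨m, hσ, h⟩
      have hm : ∃ m : ℕ, ¬ {σ ∈ W | σ β = some m}.Countable := by
        by_contra hall
        push_neg at hall
        exact hβ ((Set.countable_iUnion hall).mono hsplit)
      obtain ⟨m, hV⟩ := hm
      set V := {σ ∈ W | σ β = some m} with hVdef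
      set g : (Ordinal → Option ℕ) → (Ordinal → Option ℕ) :=
        fun σ => Function.update σ β none with hg
      have hinj : Set.InjOn g V := by
        intro σ₁ h₁ σ₂ h₂ hgg
        funext γ
        by_cases hγ : γ = β
        · rw [hγ, h₁.2, h₂.2]
        · have := congrFun hgg γ
          simpa [hg, Function.update_of_ne hγ] using this
      -- domains of images
      have hdom : ∀ σ ∈ V, {γ | g σ γ ≠ none} = {γ | σ γ ≠ none} \ {β} := by
        intro σ hσ
        ext γ
        by_cases hγ : γ = β
        · subst hγ; simp [hg]
        · simp [hg, Function.update_of_ne hγ, hγ]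
      have himg : (g '' V).Countable := by
        refine ih (g '' V) ?_ ?_ ?_
        · rintro τ ⟨σ, hσ, rfl⟩
          rw [hdom σ hσ]
          exact ((hfin σ hσ.1).diff)
        · rintro τ ⟨σ, hσ, rfl⟩
          rw [hdom σ hσ]
          have hβmem : β ∈ {γ | σ γ ≠ none} := by simp [hσ.2]
          rw [Set.ncard_diff_singleton_of_mem hβmem]
          exact Nat.sub_le_of_le_add (Nat.add_comm 1 n ▸ hcard σ hσ.1)
        · rintro τ₁ ⟨σ₁, h₁, rfl⟩ τ₂ ⟨σ₂, h₂, rfl⟩ hne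
          have hσne : σ₁ ≠ σ₂ := fun h => hne (by rw [h])
          obtain ⟨γ, k₁, k₂, hk₁, hk₂, hkk⟩ := hconf σ₁ h₁.1 σ₂ h₂.1 hσne
          have hγβ : γ ≠ β := by
            rintro rfl
            rw [h₁.2] at hk₁; rw [h₂.2] at hk₂
            cases hk₁; cases hk₂; exact hkk rfl
          exact ⟨γ, k₁, k₂, by simpa [hg, Function.update_of_ne hγβ] using hk₁,
            by simpa [hg, Function.update_of_ne hγβ] using hk₂, hkk⟩
      exact hV (Set.countable_of_injective_of_countable_image hinj himg)

/-- Same, without a bound on the size of domains. -/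
lemma conflict_countable' (W : Set (Ordinal → Option ℕ))
    (hfin : ∀ σ ∈ W, {β | σ β ≠ none}.Finite)
    (hconf : ∀ σ ∈ W, ∀ τ ∈ W, σ ≠ τ →
      ∃ β m k, σ β = some m ∧ τ β = some k ∧ m ≠ k) :
    W.Countable := by
  have hsub : W ⊆ ⋃ n : ℕ, {σ ∈ W | {β | σ β ≠ none}.ncard ≤ n} := fun σ hσ =>
    Set.mem_iUnion.mpr ⟨_, hσ, le_refl _⟩
  refine (Set.countable_iUnion fun n => ?_).mono hsub
  exact conflict_countable n _ (fun σ hσ => hfin σ hσ.1) (fun σ hσ => hσ.2)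
    (fun σ hσ τ hτ => hconf σ hσ.1 τ hτ.1)

theorem stmt14 (alpha : Ordinal) (a : Ordinal → Set ℕ)
    (hchain : ∀ beta gamma, beta < gamma → gamma < alpha → (a beta \ a gamma).Finite) :
    (∀ I : Set (Set ℕ), (∀ s ∈ I, ∀ beta, beta < alpha → (s ∩ a beta).Finite) →
      ∀ p q : QCond alpha a I, p.F = q.F → p.b = q.b →
        (∀ beta m n, p.sigma beta = some m → q.sigma beta = some n → m = n) →
        ∃ r : QCond alpha a I, QLe r p ∧ QLe r q) ∧
    (∀ S : Set (QCond alpha a {s : Set ℕ | s.Finite}),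
      (∀ p ∈ S, ∀ q ∈ S, p ≠ q → ¬ ∃ r, QLe r p ∧ QLe r q) → S.Countable) := by
  constructor
  · intro I _ p q hF hb hσ
    exact qcompat p q hF hb hσ
  · intro S hS
    classical
    -- partition by the (countably many) possible pairs (F, b)
    have hC : ({x : Set ℕ × Set ℕ | x.1.Finite ∧ x.2.Finite}).Countable := by
      have h1 : {s : Set ℕ | s.Finite}.Countable := Set.Countable.setOf_finite
      have hsub2 : {x : Set ℕ × Set ℕ | x.1.Finite ∧ x.2.Finite} ⊆
          {s : Set ℕ | s.Finite} ×ˢ {s : Set ℕ | s.Finite} := fun x hx => ⟨hx.1, hx.2⟩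
      exact Set.Countable.mono hsub2 (h1.prod h1)
    have hsub : S ⊆ ⋃ c ∈ {x : Set ℕ × Set ℕ | x.1.Finite ∧ x.2.Finite},
        {p ∈ S | p.F = c.1 ∧ p.b = c.2} := by
      intro p hp
      refine Set.mem_iUnion₂.mpr ⟨(p.F, p.b), ?_, ?_⟩
      · exact ⟨p.Ffin, p.bI⟩
      · exact ⟨hp, rfl, rfl⟩
    refine (Set.Countable.biUnion hC fun c _ => ?_).mono hsub
    -- for a fixed pair (F, b), the sigmas pairwise conflict
    set T := {p ∈ S | p.F = c.1 ∧ p.b = c.2} with hT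
    have hinj : Set.InjOn (fun p : QCond alpha a {s : Set ℕ | s.Finite} => p.sigma) T := by
      intro p hp q hq hpq
      exact qext (hp.2.1.trans hq.2.1.symm) hpq (hp.2.2.trans hq.2.2.symm)
    have himg : ((fun p : QCond alpha a {s : Set ℕ | s.Finite} => p.sigma) '' T).Countable := by
      refine conflict_countable' _ ?_ ?_
      · rintro σ ⟨p, _, rfl⟩
        exact p.Hfin
      · rintro σ₁ ⟨p, hp, rfl⟩ σ₂ ⟨q, hq, rfl⟩ hne
        have hpq : p ≠ q := fun h => hne (by rw [h])
        by_contra hconf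
        push_neg at hconf
        refine hS p hp.1 q hq.1 hpq (qcompat p q (hp.2.1.trans hq.2.1.symm)
          (hp.2.2.trans hq.2.2.symm) ?_)
        intro β m n h1 h2
        exact hconf β m n h1 h2
    exact Set.countable_of_injective_of_countable_image hinj himg
end

section
/- Suppose A is a family of infinite subsets of ℕ of regular cardinality that converges to an ultrafilter x and is hereditarily unreapable, and suppose D = {g_β : β < 𝔡} is a <*-dominating family. Then the map sending a ∈ A to some β_a with next(a,·) <* g_{β_a} is (<|A|)-to-one, and hence |A| ≤ 𝔡. -/
open Set Filter Cardinal

/-! A fibre `{a ∈ A | β_a = β}` consists of sets with `next(a, ·) <* g_β`. Such a bounded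
family is reaped by the union of every other block of a partition of ℕ into intervals
`(k n, k (n+1)]` growing faster than `g_β`, since from some point on every `a` has an element,
namely `next(a, k n)`, in every block. Hereditary unreapability makes the fibres small, and
regularity of `|A|` then forces the image of `a ↦ β_a`, which lies below `𝔡`, to have
size `|A|`. -/

lemma nxt_mem_Ioi {a : Set ℕ} (ha : a.Infinite) (k : ℕ) : nxt a k ∈ a ∩ Ioi k :=
  Nat.sInf_mem (ha.exists_gt k)

lemma domLT_iff_eventually_lt {f g : ℕ → ℕ} : domLT f g ↔ ∀ᶠ k in atTop, f k < g k := by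
  simp only [domLT, ← Nat.cofinite_eq_atTop, eventually_cofinite, not_lt]

lemma exists_strictMono_le_succ (h : ℕ → ℕ) :
    ∃ k : ℕ → ℕ, StrictMono k ∧ ∀ n, h (k n) ≤ k (n + 1) := by
  let k : ℕ → ℕ := fun n => Nat.rec 0 (fun _ km => max (h km) km + 1) n
  have hk : ∀ n, k (n + 1) = max (h (k n)) (k n) + 1 := fun _ => rfl
  refine ⟨k, strictMono_nat_of_lt_succ fun n => ?_, fun n => ?_⟩ <;> rw [hk] <;> omega

section Blocks

variable {k : ℕ → ℕ} {a s : Set ℕ}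

def evenBlocks (k : ℕ → ℕ) : Set ℕ := ⋃ n, Ioc (k (2 * n)) (k (2 * n + 1))

lemma Ioc_subset_evenBlocks (n : ℕ) : Ioc (k (2 * n)) (k (2 * n + 1)) ⊆ evenBlocks k :=
  subset_iUnion_of_subset n subset_rfl

lemma Ioc_subset_compl_evenBlocks (hk : Monotone k) (n : ℕ) :
    Ioc (k (2 * n + 1)) (k (2 * n + 1 + 1)) ⊆ (evenBlocks k)ᶜ := by
  rintro m hm ⟨_, ⟨j, rfl⟩, hj⟩
  have hdisj := hk.pairwise_disjoint_on_Ioc_succ (show 2 * n + 1 ≠ 2 * j by omega)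
  exact hdisj.ne_of_mem (by simpa using hm) (by simpa using hj) rfl

lemma infinite_inter_of_frequently_Ioc_subset (hk : StrictMono k)
    (ha : ∀ᶠ n in atTop, (a ∩ Ioc (k n) (k (n + 1))).Nonempty)
    (hs : ∃ᶠ n in atTop, Ioc (k n) (k (n + 1)) ⊆ s) : (a ∩ s).Infinite := by
  refine infinite_of_forall_exists_gt fun m => ?_
  obtain ⟨n, hmn, hsub, e, hea, he⟩ := frequently_atTop.1 (hs.and_eventually ha) m
  exact ⟨e, ⟨hea, hsub he⟩, hmn.trans_lt ((hk.le_apply).trans_lt he.1)⟩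

lemma reaps_evenBlocks (hk : StrictMono k) {B : Set (Set ℕ)}
    (hB : ∀ a ∈ B, ∀ᶠ n in atTop, (a ∩ Ioc (k n) (k (n + 1))).Nonempty) :
    Reaps (evenBlocks k) B := by
  intro a ha
  refine ⟨infinite_inter_of_frequently_Ioc_subset hk (hB a ha) ?_,
    infinite_inter_of_frequently_Ioc_subset hk (hB a ha) ?_⟩
  · exact frequently_atTop.2 fun m => ⟨2 * m, by omega, Ioc_subset_evenBlocks m⟩
  · exact frequently_atTop.2 fun m =>
      ⟨2 * m + 1, by omega, Ioc_subset_compl_evenBlocks hk.monotone m⟩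

end Blocks

lemma exists_reaps_of_domLT (h : ℕ → ℕ) {B : Set (Set ℕ)}
    (hB : ∀ a ∈ B, a.Infinite ∧ domLT (nxt a) h) : ∃ c, Reaps c B := by
  obtain ⟨k, hk, hhk⟩ := exists_strictMono_le_succ h
  refine ⟨evenBlocks k, reaps_evenBlocks hk fun a ha => ?_⟩
  obtain ⟨ha, hbdd⟩ := hB a ha
  filter_upwards [hk.tendsto_atTop.eventually (domLT_iff_eventually_lt.1 hbdd)] with n hn
  obtain ⟨hmem, hgt⟩ := nxt_mem_Ioi ha (k n)
  exact ⟨nxt a (k n), hmem, hgt, hn.le.trans (hhk n)⟩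

lemma HeredUnreapable.mk_domLT_lt {A : Set (Set ℕ)} (hher : HeredUnreapable A)
    (hA : ∀ a ∈ A, a.Infinite) (h : ℕ → ℕ) :
    #{a : Set ℕ // a ∈ A ∧ domLT (nxt a) h} < #A :=
  hher {a | a ∈ A ∧ domLT (nxt a) h} (fun _ ha => ha.1)
    (exists_reaps_of_domLT h fun a ha => ⟨hA a ha.1, ha.2⟩)

universe u v

theorem Cardinal.lift_mk_le_lift_mk_image_of_mk_fiber_lt {α : Type u} {β : Type v} {s : Set α}
    (f : α → β) (hs : (#s).IsRegular) (hfib : ∀ y, #{a // a ∈ s ∧ f a = y} < #s) :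
    lift.{v} #s ≤ lift.{u} #(f '' s) := by
  by_contra! himg
  have hcover : s ⊆ ⋃ y : f '' s, {a | a ∈ s ∧ f a = y} := fun a ha =>
    mem_iUnion.2 ⟨⟨f a, a, ha, rfl⟩, ha, rfl⟩
  have hsum := sum_lt_lift_of_isRegular hs.lift himg fun y =>
    (lift_lt.2 (hfib y) : lift.{v} #{a // a ∈ s ∧ f a = y} < _)
  rw [← lift_sum, lift_id'] at hsum
  exact ((lift_le.2 (mk_le_mk_of_subset hcover)).trans mk_iUnion_le_sum_mk_lift).not_gt hsum

theorem stmt16_general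
    (A : Set (Set ℕ)) (hAinf : ∀ a ∈ A, a.Infinite)
    (hher : HeredUnreapable A)
    (hreg : (Cardinal.mk A).IsRegular)
    (g : Ordinal → ℕ → ℕ)
    (betaMap : Set ℕ → Ordinal)
    (hbeta : ∀ a ∈ A, betaMap a < dNum.ord ∧ domLT (nxt a) (g (betaMap a))) :
    (∀ beta0 : Ordinal,
      Cardinal.mk {a : Set ℕ // a ∈ A ∧ betaMap a = beta0} < Cardinal.mk A) ∧
    Cardinal.mk A ≤ dNum := by
  have hfib : ∀ β, #{a : Set ℕ // a ∈ A ∧ betaMap a = β} < #A := by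
    intro β
    have hsub : {a | a ∈ A ∧ betaMap a = β} ⊆ {a | a ∈ A ∧ domLT (nxt a) (g β)} :=
      fun a ⟨haA, hβ⟩ => ⟨haA, hβ ▸ (hbeta a haA).2⟩
    exact (mk_le_mk_of_subset hsub).trans_lt (hher.mk_domLT_lt hAinf (g β))
  have himg : betaMap '' A ⊆ Iio dNum.ord := image_subset_iff.2 fun a ha => (hbeta a ha).1
  refine ⟨hfib, lift_le.{1}.1 ?_⟩
  calc lift.{1} #A ≤ lift.{0} #(betaMap '' A) :=
        lift_mk_le_lift_mk_image_of_mk_fiber_lt _ hreg hfib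
    _ ≤ lift.{0} #(Iio dNum.ord) := lift_le.2 (mk_le_mk_of_subset himg)
    _ = lift.{1} dNum := by rw [mk_Iio_ordinal, lift_lift, card_ord]

theorem stmt16 (x : Ultrafilter ℕ) (hx : (Filter.cofinite : Filter ℕ) ≤ ↑x)
    (A : Set (Set ℕ)) (hAinf : ∀ a ∈ A, a.Infinite)
    (hconv : Converges A x) (hher : HeredUnreapable A)
    (hreg : (Cardinal.mk A).IsRegular)
    (g : Ordinal → ℕ → ℕ)
    (hdom : ∀ h : ℕ → ℕ, ∃ beta, beta < dNum.ord ∧ domLT h (g beta))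
    (betaMap : Set ℕ → Ordinal)
    (hbeta : ∀ a ∈ A, betaMap a < dNum.ord ∧ domLT (nxt a) (g (betaMap a))) :
    (∀ beta0 : Ordinal,
      Cardinal.mk {a : Set ℕ // a ∈ A ∧ betaMap a = beta0} < Cardinal.mk A) ∧
    Cardinal.mk A ≤ dNum :=
  stmt16_general A hAinf hher hreg g betaMap hbeta
end
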